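/- arXiv:2206.02761 — 4 statements merged into one kernel-verified Lean document; each statement's English description precedes it below -/
import Mathlib

section
/- Let τᵏ and τˡ be strictly positive probability distributions on finite index sets J and I respectively, and let N : I → Set J partition J. Suppose λ : I → ℝ satisfies, for all i, (∑_{j ∈ N(i)} τᵏ_j e^{-λ_i}) / (∑_t ∑_{s ∈ N(t)} τᵏ_s e^{-λ_t}) = τˡ_i e^{λ_i} / (∑_s τˡ_s e^{λ_s}). Define μˡ_i = τˡ_i e^{λ_i} / (∑_s τˡ_s e^{λ_s}) and μᵏ_j = τᵏ_j e^{-λ_i} / (∑_t ∑_{s ∈ N(t)} τᵏ_s e^{-λ_t}) for j ∈ N(i). Then (μᵏ, μˡ) is the unique minimizer of D_KL(μᵏ‖τᵏ) + D_KL(μˡ‖τˡ) over pairs of probability distributions satisfying μˡ_i = ∑_{j ∈ N(i)} μᵏ_j for all i. -/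
open Finset

noncomputable def KL {α : Type*} [Fintype α] (μ τ : α → ℝ) : ℝ :=
  ∑ i, μ i * Real.log (μ i / τ i)

/-!
For every feasible pair `(νk, νl)`, the tilts `μk ∝ τk e^{-λ ∘ cls}` and `μl ∝ τl e^{λ}` give
`KL νk τk + KL νl τl = KL νk μk + KL νl μl - log Zk - log Zl`: the linear terms
`-∑ νk (λ ∘ cls)` and `∑ νl λ` cancel because `νl` is the pushforward of `νk` along `cls`.
The objective is therefore the constant `-log Zk - log Zl` plus two divergences from `(μk, μl)`,
and Gibbs' inequality finishes the proof.
-/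

open Real InformationTheory

section KL

variable {α : Type*} [Fintype α]

lemma mul_log_div_sub_add_eq_mul_klFun (a : ℝ) {b : ℝ} (hb : 0 < b) :
    a * log (a / b) - a + b = b * klFun (a / b) := by
  rw [klFun]
  field_simp
  ring

lemma KL_eq_sum_mul_klFun {p q : α → ℝ} (hq : ∀ i, 0 < q i) (hpq : ∑ i, p i = ∑ i, q i) :
    KL p q = ∑ i, q i * klFun (p i / q i) := by
  calc KL p q = ∑ i, (p i * log (p i / q i) - p i + q i) := by
        rw [sum_add_distrib, sum_sub_distrib, hpq, KL]
        ring
    _ = _ := sum_congr rfl fun i _ => mul_log_div_sub_add_eq_mul_klFun (p i) (hq i)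

lemma KL_nonneg {p q : α → ℝ} (hp : ∀ i, 0 ≤ p i) (hq : ∀ i, 0 < q i)
    (hpq : ∑ i, p i = ∑ i, q i) : 0 ≤ KL p q := by
  rw [KL_eq_sum_mul_klFun hq hpq]
  exact sum_nonneg fun i _ => mul_nonneg (hq i).le (klFun_nonneg (div_nonneg (hp i) (hq i).le))

lemma eq_of_KL_eq_zero {p q : α → ℝ} (hp : ∀ i, 0 ≤ p i) (hq : ∀ i, 0 < q i)
    (hpq : ∑ i, p i = ∑ i, q i) (h : KL p q = 0) : p = q := by
  have hterm_nonneg (i : α) (_ : i ∈ univ) : 0 ≤ q i * klFun (p i / q i) :=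
    mul_nonneg (hq i).le (klFun_nonneg (div_nonneg (hp i) (hq i).le))
  rw [KL_eq_sum_mul_klFun hq hpq, sum_eq_zero_iff_of_nonneg hterm_nonneg] at h
  funext i
  have hi := h i (mem_univ i)
  rwa [mul_eq_zero, or_iff_right (hq i).ne', klFun_eq_zero_iff (div_nonneg (hp i) (hq i).le),
    div_eq_one_iff_eq (hq i).ne'] at hi

lemma KL_self (p : α → ℝ) : KL p p = 0 :=
  sum_eq_zero fun i _ => by rcases eq_or_ne (p i) 0 with h | h <;> simp [h]

lemma KL_eq_KL_tilt_add {ν τ μ : α → ℝ} (f : α → ℝ) {Z : ℝ} (hτ : ∀ i, 0 < τ i) (hZ : 0 < Z)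
    (hμ : ∀ i, μ i = τ i * exp (f i) / Z) :
    KL ν τ = KL ν μ + ∑ i, ν i * f i - (∑ i, ν i) * log Z := by
  have hμ_pos (i : α) : 0 < μ i := by rw [hμ]; have := hτ i; positivity
  simp only [KL, sum_mul, ← sum_add_distrib, ← sum_sub_distrib]
  refine sum_congr rfl fun i _ => ?_
  rcases eq_or_ne (ν i) 0 with h | h
  · simp [h]
  · have hsplit : ν i / τ i = ν i / μ i * (exp (f i) / Z) := by
      rw [hμ]
      field_simp [(hτ i).ne']
    rw [hsplit, log_mul (div_ne_zero h (hμ_pos i).ne') (by positivity),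
      log_div (exp_ne_zero _) hZ.ne', log_exp]
    ring

end KL

section Fiberwise

variable {I J : Type*} [Fintype I] [Fintype J] [DecidableEq I]

lemma sum_fiberwise_eq_sum_comp {M : Type*} [AddCommMonoid M] (cls : J → I) (F : J → I → M) :
    ∑ i, ∑ j ∈ univ.filter (fun j => cls j = i), F j i = ∑ j, F j (cls j) := by
  rw [← sum_fiberwise univ cls fun j => F j (cls j)]
  exact sum_congr rfl fun i _ => sum_congr rfl fun j hj => by rw [(mem_filter.1 hj).2]

lemma sum_mul_comp_eq_of_fiberwise (cls : J → I) {νk : J → ℝ} {νl : I → ℝ}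
    (hν : ∀ i, νl i = ∑ j ∈ univ.filter (fun j => cls j = i), νk j) (g : I → ℝ) :
    ∑ j, νk j * g (cls j) = ∑ i, νl i * g i := by
  simp only [hν, sum_mul]
  exact (sum_fiberwise_eq_sum_comp cls fun j i => νk j * g i).symm

lemma KL_add_KL_eq_of_tilt (cls : J → I) {τk μk νk : J → ℝ} {τl μl νl : I → ℝ} (lam : I → ℝ)
    {Zk Zl : ℝ} (hτk : ∀ j, 0 < τk j) (hτl : ∀ i, 0 < τl i) (hZk : 0 < Zk) (hZl : 0 < Zl)
    (hμk : ∀ j, μk j = τk j * exp (-lam (cls j)) / Zk)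
    (hμl : ∀ i, μl i = τl i * exp (lam i) / Zl)
    (hνk1 : ∑ j, νk j = 1) (hν : ∀ i, νl i = ∑ j ∈ univ.filter (fun j => cls j = i), νk j) :
    KL νk τk + KL νl τl = KL νk μk + KL νl μl - log Zk - log Zl := by
  have hνl1 : ∑ i, νl i = 1 := by
    simpa [hνk1] using (sum_mul_comp_eq_of_fiberwise cls hν fun _ => 1).symm
  rw [KL_eq_KL_tilt_add (fun j => -lam (cls j)) hτk hZk hμk, KL_eq_KL_tilt_add lam hτl hZl hμl,
    hνk1, hνl1]
  simp only [mul_neg, sum_neg_distrib, sum_mul_comp_eq_of_fiberwise cls hν lam]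
  ring

end Fiberwise

theorem stmt0_general {I J : Type*} [Fintype I] [Fintype J] [DecidableEq I]
    (cls : J → I)
    (τk : J → ℝ) (τl : I → ℝ)
    (hτk : ∀ j, 0 < τk j) (hτl : ∀ i, 0 < τl i)
    (hτk1 : ∑ j, τk j = 1)
    (lam : I → ℝ)
    (Zk : ℝ) (hZk : Zk = ∑ t, ∑ s ∈ univ.filter (fun s => cls s = t), τk s * Real.exp (-lam t))
    (Zl : ℝ) (hZl : Zl = ∑ s, τl s * Real.exp (lam s))
    (hcons : ∀ i, (∑ j ∈ univ.filter (fun j => cls j = i), τk j * Real.exp (-lam i)) / Zk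
              = τl i * Real.exp (lam i) / Zl)
    (μk : J → ℝ) (hμk : ∀ j, μk j = τk j * Real.exp (-lam (cls j)) / Zk)
    (μl : I → ℝ) (hμl : ∀ i, μl i = τl i * Real.exp (lam i) / Zl) :
    ((∀ j, 0 ≤ μk j) ∧ (∑ j, μk j = 1) ∧ (∀ i, 0 ≤ μl i) ∧ (∑ i, μl i = 1) ∧
      (∀ i, μl i = ∑ j ∈ univ.filter (fun j => cls j = i), μk j)) ∧
    ∀ νk : J → ℝ, ∀ νl : I → ℝ,
      (∀ j, 0 ≤ νk j) → (∑ j, νk j = 1) → (∀ i, 0 ≤ νl i) → (∑ i, νl i = 1) →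
      (∀ i, νl i = ∑ j ∈ univ.filter (fun j => cls j = i), νk j) →
      (KL μk τk + KL μl τl ≤ KL νk τk + KL νl τl ∧
        (KL νk τk + KL νl τl = KL μk τk + KL μl τl → νk = μk ∧ νl = μl)) := by
  obtain ⟨j₀⟩ : Nonempty J := by
    by_contra h
    simp [not_nonempty_iff.1 h] at hτk1
  have hZk_sum : Zk = ∑ j, τk j * exp (-lam (cls j)) :=
    hZk.trans (sum_fiberwise_eq_sum_comp cls fun j i => τk j * exp (-lam i))
  have hZk_pos : 0 < Zk :=
    hZk_sum ▸ sum_pos (fun j _ => mul_pos (hτk j) (exp_pos _)) ⟨j₀, mem_univ _⟩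
  have hZl_pos : 0 < Zl :=
    hZl ▸ sum_pos (fun i _ => mul_pos (hτl i) (exp_pos _)) ⟨cls j₀, mem_univ _⟩
  have hμk_pos (j : J) : 0 < μk j := by rw [hμk]; have := hτk j; positivity
  have hμl_pos (i : I) : 0 < μl i := by rw [hμl]; have := hτl i; positivity
  have hμk1 : ∑ j, μk j = 1 := by simp_rw [hμk, ← sum_div, ← hZk_sum, div_self hZk_pos.ne']
  have hμl1 : ∑ i, μl i = 1 := by simp_rw [hμl, ← sum_div, ← hZl, div_self hZl_pos.ne']
  have hμ : ∀ i, μl i = ∑ j ∈ univ.filter (fun j => cls j = i), μk j := fun i => by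
    rw [hμl, ← hcons, sum_div]
    exact sum_congr rfl fun j hj => by rw [hμk, (mem_filter.1 hj).2]
  have hμ_obj := KL_add_KL_eq_of_tilt cls lam hτk hτl hZk_pos hZl_pos hμk hμl hμk1 hμ
  rw [KL_self, KL_self] at hμ_obj
  refine ⟨⟨fun j => (hμk_pos j).le, hμk1, fun i => (hμl_pos i).le, hμl1, hμ⟩,
    fun νk νl hνk hνk1 hνl hνl1 hν => ?_⟩
  have hν_obj := KL_add_KL_eq_of_tilt cls lam hτk hτl hZk_pos hZl_pos hμk hμl hνk1 hν
  have hk := KL_nonneg hνk hμk_pos (hνk1.trans hμk1.symm)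
  have hl := KL_nonneg hνl hμl_pos (hνl1.trans hμl1.symm)
  refine ⟨by linarith, fun h => ⟨?_, ?_⟩⟩
  · exact eq_of_KL_eq_zero hνk hμk_pos (hνk1.trans hμk1.symm) (by linarith)
  · exact eq_of_KL_eq_zero hνl hμl_pos (hνl1.trans hμl1.symm) (by linarith)

theorem stmt0 {I J : Type*} [Fintype I] [Fintype J] [DecidableEq I]
    (cls : J → I)
    (τk : J → ℝ) (τl : I → ℝ)
    (hτk : ∀ j, 0 < τk j) (hτl : ∀ i, 0 < τl i)
    (hτk1 : ∑ j, τk j = 1) (hτl1 : ∑ i, τl i = 1)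
    (lam : I → ℝ)
    (Zk : ℝ) (hZk : Zk = ∑ t, ∑ s ∈ univ.filter (fun s => cls s = t), τk s * Real.exp (-lam t))
    (Zl : ℝ) (hZl : Zl = ∑ s, τl s * Real.exp (lam s))
    (hcons : ∀ i, (∑ j ∈ univ.filter (fun j => cls j = i), τk j * Real.exp (-lam i)) / Zk
              = τl i * Real.exp (lam i) / Zl)
    (μk : J → ℝ) (hμk : ∀ j, μk j = τk j * Real.exp (-lam (cls j)) / Zk)
    (μl : I → ℝ) (hμl : ∀ i, μl i = τl i * Real.exp (lam i) / Zl) :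
    ((∀ j, 0 ≤ μk j) ∧ (∑ j, μk j = 1) ∧ (∀ i, 0 ≤ μl i) ∧ (∑ i, μl i = 1) ∧
      (∀ i, μl i = ∑ j ∈ univ.filter (fun j => cls j = i), μk j)) ∧
    ∀ νk : J → ℝ, ∀ νl : I → ℝ,
      (∀ j, 0 ≤ νk j) → (∑ j, νk j = 1) → (∀ i, 0 ≤ νl i) → (∑ i, νl i = 1) →
      (∀ i, νl i = ∑ j ∈ univ.filter (fun j => cls j = i), νk j) →
      (KL μk τk + KL μl τl ≤ KL νk τk + KL νl τl ∧
        (KL νk τk + KL νl τl = KL μk τk + KL μl τl → νk = μk ∧ νl = μl)) :=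
  stmt0_general cls τk τl hτk hτl hτk1 lam Zk hZk Zl hZl hcons μk hμk μl hμl
end

section
/- Closed form for the consistency program: let τᵏ, τˡ be strictly positive probability vectors on J and I with N : I → Set J a partition with nonempty blocks, and let τ̄_i = ∑_{j∈N(i)} τᵏ_j. Then the minimizer (μᵏ, μˡ) of D_KL(μᵏ‖τᵏ)+D_KL(μˡ‖τˡ) subject to μˡ_i = ∑_{j∈N(i)} μᵏ_j satisfies μˡ_i = √(τ̄_i τˡ_i) / ∑_s √(τ̄_s τˡ_s), and μᵏ_j = μˡ_i · τᵏ_j / τ̄_i for j ∈ N(i). -/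
/-!
Put `Z = ∑ᵢ √(τ̄ᵢ τˡᵢ)` and `mᵢ = √(τ̄ᵢ τˡᵢ) / Z`, a probability vector. For a feasible pair
`(νᵏ, νˡ)` the log-sum inequality on each block gives `D(νᵏ‖τᵏ) ≥ D(νˡ‖τ̄)`, with equality when
`νᵏ` is proportional to `τᵏ` on every block, and termwise
`D(νˡ‖τ̄) + D(νˡ‖τˡ) = 2 D(νˡ‖m) - 2 log Z`. By Gibbs' inequality the objective is therefore at
least `-2 log Z`, and the proposed pair attains this value because `μˡ = m`.
-/

open Finset

theorem sum_mul_log_sum_div_sum_le {ι : Type*} (s : Finset ι) (a b : ι → ℝ)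
    (ha : ∀ j ∈ s, 0 ≤ a j) (hb : ∀ j ∈ s, 0 < b j) :
    (∑ j ∈ s, a j) * Real.log ((∑ j ∈ s, a j) / ∑ j ∈ s, b j) ≤
      ∑ j ∈ s, a j * Real.log (a j / b j) := by
  rcases s.eq_empty_or_nonempty with rfl | hs
  · simp
  set B := ∑ j ∈ s, b j
  have hB : 0 < B := sum_pos hb hs
  -- Jensen for `x ↦ x log x` at the points `a j / b j` with weights `b j / B`
  have jensen := Real.convexOn_mul_log.map_sum_le (t := s) (w := fun j => b j / B)
    (p := fun j => a j / b j) (fun j hj => (div_pos (hb j hj) hB).le)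
    (by rw [← sum_div, div_self hB.ne'])
    (fun j hj => Set.mem_Ici.2 (div_nonneg (ha j hj) (hb j hj).le))
  have hmean : ∑ j ∈ s, b j / B * (a j / b j) = (∑ j ∈ s, a j) / B := by
    rw [sum_div]
    refine sum_congr rfl fun j hj => ?_
    field_simp [(hb j hj).ne']
  have hright : ∑ j ∈ s, b j / B * (a j / b j * Real.log (a j / b j)) =
      (∑ j ∈ s, a j * Real.log (a j / b j)) / B := by
    rw [sum_div]
    refine sum_congr rfl fun j hj => ?_
    field_simp [(hb j hj).ne']
  simp only [smul_eq_mul] at jensen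
  rwa [hmean, hright, div_mul_eq_mul_div, div_le_div_iff_of_pos_right hB] at jensen

theorem KL_nonneg_s15 {α : Type*} [Fintype α] (ν μ : α → ℝ) (hν : ∀ i, 0 ≤ ν i)
    (hμ : ∀ i, 0 < μ i) (hsum : ∑ i, ν i = ∑ i, μ i) : 0 ≤ KL ν μ := by
  rcases isEmpty_or_nonempty α with _ | _
  · simp [KL]
  have := sum_mul_log_sum_div_sum_le univ ν μ (fun i _ => hν i) (fun i _ => hμ i)
  rwa [hsum, div_self (sum_pos (fun i _ => hμ i) univ_nonempty).ne', Real.log_one,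
    mul_zero] at this

section Coarsening

variable {I J : Type*} [Fintype J] [DecidableEq I]

def fiberSum (cls : J → I) (ν : J → ℝ) (i : I) : ℝ :=
  ∑ j ∈ univ.filter (fun j => cls j = i), ν j

theorem sum_fiberSum [Fintype I] (cls : J → I) (ν : J → ℝ) :
    ∑ i, fiberSum cls ν i = ∑ j, ν j :=
  sum_fiberwise univ cls ν

theorem KL_fiberSum_le [Fintype I] (cls : J → I) (ν τ : J → ℝ) (hν : ∀ j, 0 ≤ ν j)
    (hτ : ∀ j, 0 < τ j) :
    KL (fiberSum cls ν) (fiberSum cls τ) ≤ KL ν τ := by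
  rw [KL, KL, ← sum_fiberwise univ cls]
  exact sum_le_sum fun i _ =>
    sum_mul_log_sum_div_sum_le _ ν τ (fun j _ => hν j) (fun j _ => hτ j)

theorem fiberSum_comp_mul (cls : J → I) (ρ : I → ℝ) (τ : J → ℝ) (i : I) :
    fiberSum cls (fun j => ρ (cls j) * τ j) i = ρ i * fiberSum cls τ i := by
  rw [fiberSum, fiberSum, mul_sum]
  exact sum_congr rfl fun j hj => by rw [(mem_filter.1 hj).2]

theorem fiberSum_comp_div_mul (cls : J → I) {τ : J → ℝ} (hτ : ∀ i, fiberSum cls τ i ≠ 0)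
    (μ : I → ℝ) :
    fiberSum cls (fun j => μ (cls j) / fiberSum cls τ (cls j) * τ j) = μ :=
  funext fun i => by
    rw [fiberSum_comp_mul cls (fun i => μ i / fiberSum cls τ i), div_mul_cancel₀ _ (hτ i)]

theorem KL_eq_KL_fiberSum [Fintype I] (cls : J → I) (ρ : I → ℝ) (τ : J → ℝ)
    (hτ : ∀ j, 0 < τ j) :
    KL (fun j => ρ (cls j) * τ j) τ =
      KL (fiberSum cls fun j => ρ (cls j) * τ j) (fiberSum cls τ) := by
  rw [KL, KL, ← sum_fiberwise univ cls]
  refine sum_congr rfl fun i _ => ?_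
  have hterm : ∀ j ∈ univ.filter (fun j => cls j = i),
      ρ (cls j) * τ j * Real.log (ρ (cls j) * τ j / τ j) = ρ i * Real.log (ρ i) * τ j := by
    intro j hj
    rw [(mem_filter.1 hj).2, mul_div_cancel_right₀ _ (hτ j).ne']
    ring
  rw [sum_congr rfl hterm, ← mul_sum, fiberSum_comp_mul]
  change ρ i * Real.log (ρ i) * fiberSum cls τ i = _
  rcases eq_or_ne (fiberSum cls τ i) 0 with h0 | h0
  · simp [h0]
  · rw [mul_div_cancel_right₀ _ h0]
    ring

end Coarsening

theorem mul_log_div_add_mul_log_div (x : ℝ) {a b Z : ℝ} (ha : 0 < a) (hb : 0 < b)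
    (hZ : 0 < Z) :
    x * Real.log (x / a) + x * Real.log (x / b) =
      2 * (x * Real.log (x / (√(a * b) / Z))) - 2 * x * Real.log Z := by
  rcases eq_or_ne x 0 with rfl | hx
  · simp
  have hab : 0 < a * b := mul_pos ha hb
  rw [Real.log_div hx ha.ne', Real.log_div hx hb.ne',
    Real.log_div hx (div_pos (Real.sqrt_pos.2 hab) hZ).ne',
    Real.log_div (Real.sqrt_pos.2 hab).ne' hZ.ne', Real.log_sqrt hab.le,
    Real.log_mul ha.ne' hb.ne']
  ring

theorem KL_self_s15 {α : Type*} [Fintype α] (μ : α → ℝ) : KL μ μ = 0 := by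
  simp [KL]

section GeometricMean

variable {α : Type*} [Fintype α] [Nonempty α] {a b : α → ℝ}

noncomputable def normGeomMean (a b : α → ℝ) (i : α) : ℝ :=
  √(a i * b i) / ∑ s, √(a s * b s)

theorem sum_sqrt_mul_pos (ha : ∀ i, 0 < a i) (hb : ∀ i, 0 < b i) : 0 < ∑ i, √(a i * b i) :=
  sum_pos (fun i _ => Real.sqrt_pos.2 (mul_pos (ha i) (hb i))) univ_nonempty

theorem normGeomMean_pos (ha : ∀ i, 0 < a i) (hb : ∀ i, 0 < b i) (i : α) :
    0 < normGeomMean a b i :=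
  div_pos (Real.sqrt_pos.2 (mul_pos (ha i) (hb i))) (sum_sqrt_mul_pos ha hb)

theorem sum_normGeomMean (ha : ∀ i, 0 < a i) (hb : ∀ i, 0 < b i) :
    ∑ i, normGeomMean a b i = 1 := by
  unfold normGeomMean
  rw [← sum_div, div_self (sum_sqrt_mul_pos ha hb).ne']

theorem KL_add_KL_eq (ν : α → ℝ) (ha : ∀ i, 0 < a i) (hb : ∀ i, 0 < b i) :
    KL ν a + KL ν b =
      2 * KL ν (normGeomMean a b) - 2 * (∑ i, ν i) * Real.log (∑ i, √(a i * b i)) := by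
  simp only [KL, normGeomMean, ← sum_add_distrib, mul_sum, sum_mul, ← sum_sub_distrib]
  exact sum_congr rfl fun i _ =>
    mul_log_div_add_mul_log_div (ν i) (ha i) (hb i) (sum_sqrt_mul_pos ha hb)

end GeometricMean

section ConsistencyProgram

variable {I J : Type*} [Fintype I] [Nonempty I] [Fintype J] [DecidableEq I] (cls : J → I)
  {τ : J → ℝ} {b : I → ℝ}

theorem neg_two_mul_log_le_KL_add_KL (hτ : ∀ j, 0 < τ j) (hτbar : ∀ i, 0 < fiberSum cls τ i)
    (hb : ∀ i, 0 < b i) {νk : J → ℝ} {νl : I → ℝ} (hνk : ∀ j, 0 ≤ νk j) (hνl : ∀ i, 0 ≤ νl i)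
    (hνl1 : ∑ i, νl i = 1) (hcons : νl = fiberSum cls νk) :
    -2 * Real.log (∑ i, √(fiberSum cls τ i * b i)) ≤ KL νk τ + KL νl b := by
  have hgibbs := KL_nonneg_s15 νl _ hνl (normGeomMean_pos hτbar hb)
    (by rw [hνl1, sum_normGeomMean hτbar hb])
  calc -2 * Real.log (∑ i, √(fiberSum cls τ i * b i))
      ≤ KL νl (fiberSum cls τ) + KL νl b := by
        rw [KL_add_KL_eq νl hτbar hb, hνl1]
        linarith
    _ ≤ KL νk τ + KL νl b := by
        rw [hcons]
        gcongr
        exact KL_fiberSum_le cls νk τ hνk hτ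

theorem KL_add_KL_normGeomMean (hτ : ∀ j, 0 < τ j) (hτbar : ∀ i, 0 < fiberSum cls τ i)
    (hb : ∀ i, 0 < b i) :
    KL (fun j => normGeomMean (fiberSum cls τ) b (cls j) / fiberSum cls τ (cls j) * τ j) τ +
        KL (normGeomMean (fiberSum cls τ) b) b =
      -2 * Real.log (∑ i, √(fiberSum cls τ i * b i)) := by
  rw [KL_eq_KL_fiberSum cls (fun i => normGeomMean (fiberSum cls τ) b i / fiberSum cls τ i) τ hτ,
    fiberSum_comp_div_mul cls (fun i => (hτbar i).ne'), KL_add_KL_eq _ hτbar hb, KL_self_s15,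
    sum_normGeomMean hτbar hb]
  ring

end ConsistencyProgram

theorem stmt15_general {I J : Type*} [Fintype I] [Fintype J] [DecidableEq I]
    (cls : J → I) (hsurj : Function.Surjective cls)
    (τk : J → ℝ) (τl : I → ℝ)
    (hτk : ∀ j, 0 < τk j) (hτl : ∀ i, 0 < τl i)
    (hτl1 : ∑ i, τl i = 1)
    (τbar : I → ℝ)
    (hτbar : ∀ i, τbar i = ∑ j ∈ univ.filter (fun j => cls j = i), τk j)
    (μl : I → ℝ) (hμl : ∀ i, μl i = Real.sqrt (τbar i * τl i) / ∑ s, Real.sqrt (τbar s * τl s))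
    (μk : J → ℝ) (hμk : ∀ j, μk j = μl (cls j) * τk j / τbar (cls j)) :
    -- (μk, μl) is the minimizer of the consistency program
    ((∀ j, 0 ≤ μk j) ∧ (∑ j, μk j = 1) ∧ (∀ i, 0 ≤ μl i) ∧ (∑ i, μl i = 1) ∧
      (∀ i, μl i = ∑ j ∈ univ.filter (fun j => cls j = i), μk j)) ∧
    ∀ νk : J → ℝ, ∀ νl : I → ℝ,
      (∀ j, 0 ≤ νk j) → (∑ j, νk j = 1) → (∀ i, 0 ≤ νl i) → (∑ i, νl i = 1) →
      (∀ i, νl i = ∑ j ∈ univ.filter (fun j => cls j = i), νk j) →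
      KL μk τk + KL μl τl ≤ KL νk τk + KL νl τl := by
  obtain rfl : τbar = fiberSum cls τk := funext hτbar
  obtain rfl : μl = normGeomMean (fiberSum cls τk) τl := funext hμl
  obtain rfl : μk = fun j => normGeomMean (fiberSum cls τk) τl (cls j) /
      fiberSum cls τk (cls j) * τk j :=
    funext fun j => by rw [hμk]; ring
  have hτbar_pos : ∀ i, 0 < fiberSum cls τk i := fun i => by
    obtain ⟨j, rfl⟩ := hsurj i
    exact sum_pos (fun j _ => hτk j) ⟨j, mem_filter.2 ⟨mem_univ j, rfl⟩⟩
  have : Nonempty I := by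
    by_contra h
    simp [not_nonempty_iff.1 h] at hτl1
  have hμl_pos := normGeomMean_pos hτbar_pos hτl
  have hμl1 := sum_normGeomMean hτbar_pos hτl
  have hμl_cons := fiberSum_comp_div_mul cls (fun i => (hτbar_pos i).ne')
    (normGeomMean (fiberSum cls τk) τl)
  refine ⟨⟨fun j => mul_nonneg (div_pos (hμl_pos _) (hτbar_pos _)).le (hτk j).le,
    by rw [← sum_fiberSum cls, hμl_cons, hμl1], fun i => (hμl_pos i).le, hμl1,
    fun i => (congrFun hμl_cons i).symm⟩, ?_⟩
  intro νk νl hνk _ hνl hνl1 hνcons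
  rw [KL_add_KL_normGeomMean cls hτk hτbar_pos hτl]
  exact neg_two_mul_log_le_KL_add_KL cls hτk hτbar_pos hτl hνk hνl hνl1 (funext hνcons)

theorem stmt15 {I J : Type*} [Fintype I] [Fintype J] [DecidableEq I]
    (cls : J → I) (hsurj : Function.Surjective cls)
    (τk : J → ℝ) (τl : I → ℝ)
    (hτk : ∀ j, 0 < τk j) (hτl : ∀ i, 0 < τl i)
    (hτk1 : ∑ j, τk j = 1) (hτl1 : ∑ i, τl i = 1)
    (τbar : I → ℝ)
    (hτbar : ∀ i, τbar i = ∑ j ∈ univ.filter (fun j => cls j = i), τk j)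
    (μl : I → ℝ) (hμl : ∀ i, μl i = Real.sqrt (τbar i * τl i) / ∑ s, Real.sqrt (τbar s * τl s))
    (μk : J → ℝ) (hμk : ∀ j, μk j = μl (cls j) * τk j / τbar (cls j)) :
    -- (μk, μl) is the minimizer of the consistency program
    ((∀ j, 0 ≤ μk j) ∧ (∑ j, μk j = 1) ∧ (∀ i, 0 ≤ μl i) ∧ (∑ i, μl i = 1) ∧
      (∀ i, μl i = ∑ j ∈ univ.filter (fun j => cls j = i), μk j)) ∧
    ∀ νk : J → ℝ, ∀ νl : I → ℝ,
      (∀ j, 0 ≤ νk j) → (∑ j, νk j = 1) → (∀ i, 0 ≤ νl i) → (∑ i, νl i = 1) →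
      (∀ i, νl i = ∑ j ∈ univ.filter (fun j => cls j = i), νk j) →
      KL μk τk + KL μl τl ≤ KL νk τk + KL νl τl :=
  stmt15_general cls hsurj τk τl hτk hτl hτl1 τbar hτbar μl hμl μk hμk
end

section
/- If λ_i = ½ log(τ̄_i / τˡ_i) with τ̄_i = ∑_{j∈N(i)} τᵏ_j, then the two reparameterized distributions μˡ_i = τˡ_i e^{λ_i}/∑_s τˡ_s e^{λ_s} and μᵏ_j = τᵏ_j e^{-λ_i}/∑_t ∑_{s∈N(t)} τᵏ_s e^{-λ_t} (j ∈ N(i)) agree on their marginals: ∑_{j∈N(i)} μᵏ_j = μˡ_i for all i. -/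
/-!
The choice of `λ` balances the two unnormalized weights: `τˡ_i e^{λ_i} = τ̄_i e^{-λ_i} = √(τˡ_i τ̄_i)`.
Summing `τᵏ_j e^{-λ_i}` over the block `N(i)` gives `τ̄_i e^{-λ_i}`, so the unnormalized marginals of
`μᵏ` are the unnormalized weights of `μˡ`, and hence so are the normalizing constants.
-/

open Finset

/-- Both sides equal `√(a b)`. -/
theorem mul_exp_half_log_div_eq {a b : ℝ} (ha : 0 < a) (hb : 0 < b) :
    a * Real.exp (1 / 2 * Real.log (b / a)) = b * Real.exp (-(1 / 2 * Real.log (b / a))) := by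
  have hexp : Real.exp (1 / 2 * Real.log (b / a)) =
      Real.exp (Real.log (b / a)) * Real.exp (-(1 / 2 * Real.log (b / a))) := by
    rw [← Real.exp_add]; ring_nf
  rw [hexp, Real.exp_log (div_pos hb ha), ← mul_assoc, mul_div_cancel₀ b ha.ne']

theorem sum_fiber_mul_comp {I J : Type*} [Fintype J] [DecidableEq I] (cls : J → I)
    (a : J → ℝ) (c : I → ℝ) (i : I) :
    ∑ j ∈ univ.filter (fun j => cls j = i), a j * c (cls j) =
      (∑ j ∈ univ.filter (fun j => cls j = i), a j) * c i := by
  rw [sum_mul]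
  exact sum_congr rfl fun j hj => by rw [(mem_filter.1 hj).2]

theorem stmt16_general {I J : Type*} [Fintype I] [Fintype J] [DecidableEq I]
    (cls : J → I) (hsurj : Function.Surjective cls)
    (τk : J → ℝ) (τl : I → ℝ)
    (hτk : ∀ j, 0 < τk j) (hτl : ∀ i, 0 < τl i)
    (τbar : I → ℝ)
    (hτbar : ∀ i, τbar i = ∑ j ∈ univ.filter (fun j => cls j = i), τk j)
    (lam : I → ℝ) (hlam : ∀ i, lam i = (1 / 2) * Real.log (τbar i / τl i))
    (μl : I → ℝ)
    (hμl : ∀ i, μl i = τl i * Real.exp (lam i) / ∑ s, τl s * Real.exp (lam s))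
    (μk : J → ℝ)
    (hμk : ∀ j, μk j = τk j * Real.exp (-lam (cls j)) /
      ∑ t, ∑ s ∈ univ.filter (fun s => cls s = t), τk s * Real.exp (-lam t)) :
    ∀ i, ∑ j ∈ univ.filter (fun j => cls j = i), μk j = μl i := by
  have hτbar_pos : ∀ i, 0 < τbar i := fun i => by
    obtain ⟨j, rfl⟩ := hsurj i
    rw [hτbar]
    exact sum_pos' (fun j _ => (hτk j).le) ⟨j, by simp, hτk j⟩
  have hbalance : ∀ i, τl i * Real.exp (lam i) = τbar i * Real.exp (-lam i) := fun i => by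
    rw [hlam]
    exact mul_exp_half_log_div_eq (hτl i) (hτbar_pos i)
  have hden : ∑ t, ∑ s ∈ univ.filter (fun s => cls s = t), τk s * Real.exp (-lam t) =
      ∑ s, τl s * Real.exp (lam s) :=
    sum_congr rfl fun t _ => by rw [← sum_mul, ← hτbar, hbalance]
  intro i
  simp only [hμk, hden]
  rw [← sum_div, sum_fiber_mul_comp cls τk (fun t => Real.exp (-lam t)), ← hτbar, hμl, hbalance]

theorem stmt16 {I J : Type*} [Fintype I] [Fintype J] [DecidableEq I]
    (cls : J → I) (hsurj : Function.Surjective cls)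
    (τk : J → ℝ) (τl : I → ℝ)
    (hτk : ∀ j, 0 < τk j) (hτl : ∀ i, 0 < τl i)
    (hτk1 : ∑ j, τk j = 1) (hτl1 : ∑ i, τl i = 1)
    (τbar : I → ℝ)
    (hτbar : ∀ i, τbar i = ∑ j ∈ univ.filter (fun j => cls j = i), τk j)
    (lam : I → ℝ) (hlam : ∀ i, lam i = (1 / 2) * Real.log (τbar i / τl i))
    (μl : I → ℝ)
    (hμl : ∀ i, μl i = τl i * Real.exp (lam i) / ∑ s, τl s * Real.exp (lam s))
    (μk : J → ℝ)
    (hμk : ∀ j, μk j = τk j * Real.exp (-lam (cls j)) /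
      ∑ t, ∑ s ∈ univ.filter (fun s => cls s = t), τk s * Real.exp (-lam t)) :
    ∀ i, ∑ j ∈ univ.filter (fun j => cls j = i), μk j = μl i :=
  stmt16_general cls hsurj τk τl hτk hτl τbar hτbar lam hlam μl hμl μk hμk
end

section
/- For probability vectors p, q on Fin n with q strictly positive, Pinsker's inequality holds: D_KL(p‖q) ≥ 2 (∑_i |p_i − q_i| / 2)², i.e., KL divergence upper-bounds twice the squared total variation distance. -/
/-!
Writing `klFun t = t log t + 1 - t`, the divergence is `∑ q_i klFun (p_i / q_i)`. Calculus gives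
the pointwise bound `3 (t - 1)² ≤ 2 (t + 2) klFun t` for `t ≥ 0` (the difference has derivative
`4 ((t + 1) log t - 2 (t - 1))`, which has the sign of `t - 1`), i.e.
`(p_i - q_i)² / (p_i + 2 q_i) ≤ (2/3) q_i klFun (p_i / q_i)`. Summing and applying
Cauchy–Schwarz with the weights `p_i + 2 q_i`, whose total is `3`, yields
`(∑ |p_i - q_i|)² ≤ 2 D(p‖q)`.
-/

open Real Finset InformationTheory

lemma le_of_hasDerivAt_of_sub_mul_nonneg {f f' : ℝ → ℝ} {a c x : ℝ}
    (hf : ∀ y, a < y → HasDerivAt f (f' y) y) (hf' : ∀ y, a < y → 0 ≤ (y - c) * f' y)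
    (hc : a < c) (hx : a < x) : f c ≤ f x := by
  have hcont : ∀ {u v : ℝ}, a < u → ContinuousOn f (Set.Icc u v) := fun hu y hy =>
    (hf y (hu.trans_le hy.1)).continuousAt.continuousWithinAt
  have hderiv : ∀ {u v : ℝ}, a < u → ∀ y ∈ interior (Set.Icc u v),
      HasDerivWithinAt f (f' y) (interior (Set.Icc u v)) y := fun hu y hy => by
    rw [interior_Icc] at hy ⊢
    exact (hf y (hu.trans hy.1)).hasDerivWithinAt
  rcases le_total c x with hcx | hxc
  · refine monotoneOn_of_hasDerivWithinAt_nonneg (convex_Icc c x) (hcont hc) (hderiv hc)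
      (fun y hy => ?_) (Set.left_mem_Icc.2 hcx) (Set.right_mem_Icc.2 hcx) hcx
    rw [interior_Icc] at hy
    exact nonneg_of_mul_nonneg_right (hf' y (hc.trans hy.1)) (sub_pos.2 hy.1)
  · refine antitoneOn_of_hasDerivWithinAt_nonpos (convex_Icc x c) (hcont hx) (hderiv hx)
      (fun y hy => ?_) (Set.left_mem_Icc.2 hxc) (Set.right_mem_Icc.2 hxc) hxc
    rw [interior_Icc] at hy
    exact nonpos_of_mul_nonneg_right (hf' y (hx.trans hy.1)) (sub_neg.2 hy.2)

lemma sub_one_mul_add_one_mul_log_sub_nonneg {t : ℝ} (ht : 0 < t) :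
    0 ≤ (t - 1) * ((t + 1) * log t - 2 * (t - 1)) := by
  set H : ℝ → ℝ := fun s => (s + 1) * log s - 2 * (s - 1)
  have hH : ∀ s, 0 < s → HasDerivAt H (log s + s⁻¹ - 1) s := fun s hs => by
    have := (((hasDerivAt_id s).add_const 1).mul (hasDerivAt_log hs.ne')).sub
      (((hasDerivAt_id s).sub_const 1).const_mul 2)
    refine this.congr_deriv ?_
    rw [id_eq]
    field_simp
    ring
  have hmono : MonotoneOn H (Set.Ioi 0) := by
    refine monotoneOn_of_hasDerivWithinAt_nonneg (f' := fun s => log s + s⁻¹ - 1) (convex_Ioi 0)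
      (fun s hs => (hH s hs).continuousAt.continuousWithinAt) (fun s hs => ?_) (fun s hs => ?_)
    · rw [interior_Ioi] at hs ⊢
      exact (hH s hs).hasDerivWithinAt
    · rw [interior_Ioi] at hs
      linarith [one_sub_inv_le_log_of_pos hs]
  have hH1 : H 1 = 0 := by simp [H]
  rcases le_total 1 t with h1t | ht1
  · exact mul_nonneg (sub_nonneg.2 h1t) (hH1 ▸ hmono (Set.mem_Ioi.2 one_pos) ht h1t)
  · exact mul_nonneg_of_nonpos_of_nonpos (sub_nonpos.2 ht1)
      (hH1 ▸ hmono ht (Set.mem_Ioi.2 one_pos) ht1)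

lemma three_mul_sub_one_sq_le_mul_klFun {t : ℝ} (ht : 0 ≤ t) :
    3 * (t - 1) ^ 2 ≤ 2 * (t + 2) * klFun t := by
  rcases ht.eq_or_lt with rfl | ht
  · norm_num [klFun_zero]
  set G : ℝ → ℝ := fun s => 2 * (s + 2) * klFun s - 3 * (s - 1) ^ 2
  have hG : ∀ s, 0 < s → HasDerivAt G (4 * ((s + 1) * log s - 2 * (s - 1))) s := fun s hs => by
    have := ((((hasDerivAt_id s).add_const 2).const_mul 2).mul
      (hasDerivAt_klFun hs.ne')).sub
      ((((hasDerivAt_id s).sub_const 1).pow 2).const_mul 3)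
    refine this.congr_deriv ?_
    rw [id_eq, klFun_apply]
    ring
  have := le_of_hasDerivAt_of_sub_mul_nonneg hG (fun s hs => by
    linarith [sub_one_mul_add_one_mul_log_sub_nonneg hs]) one_pos ht
  simp only [G, klFun_one] at this
  linarith

lemma sq_sub_div_le_mul_klFun {x y : ℝ} (hx : 0 ≤ x) (hy : 0 < y) :
    (x - y) ^ 2 / (x + 2 * y) ≤ 2 / 3 * (y * klFun (x / y)) := by
  obtain ⟨t, ht, rfl⟩ : ∃ t, 0 ≤ t ∧ x = t * y :=
    ⟨x / y, div_nonneg hx hy.le, by field_simp⟩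
  rw [mul_div_cancel_right₀ t hy.ne', div_le_iff₀ (by positivity)]
  linear_combination (y ^ 2 / 3) * three_mul_sub_one_sq_le_mul_klFun ht

lemma sum_mul_klFun_div {ι : Type*} (s : Finset ι) (p q : ι → ℝ)
    (hq : ∀ i ∈ s, q i ≠ 0) :
    ∑ i ∈ s, q i * klFun (p i / q i) =
      ∑ i ∈ s, p i * log (p i / q i) + ∑ i ∈ s, q i - ∑ i ∈ s, p i := by
  rw [← sum_add_distrib, ← sum_sub_distrib]
  refine sum_congr rfl fun i hi => ?_
  rw [klFun_apply]
  field_simp [hq i hi]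

theorem stmt18 {n : ℕ} (p q : Fin n → ℝ)
    (hp : ∀ i, 0 ≤ p i) (hq : ∀ i, 0 < q i)
    (hp1 : ∑ i, p i = 1) (hq1 : ∑ i, q i = 1) :
    2 * ((∑ i, |p i - q i|) / 2) ^ 2 ≤ ∑ i, p i * Real.log (p i / q i) := by
  have hweight : ∑ i, (p i + 2 * q i) = 3 := by
    rw [sum_add_distrib, ← mul_sum, hp1, hq1]
    norm_num
  have cauchySchwarz := sq_sum_div_le_sum_sq_div univ (fun i => |p i - q i|)
    (g := fun i => p i + 2 * q i) fun i _ => by linarith [hp i, hq i]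
  simp only [sq_abs, hweight] at cauchySchwarz
  have pointwise : ∑ i, (p i - q i) ^ 2 / (p i + 2 * q i) ≤
      2 / 3 * ∑ i, q i * klFun (p i / q i) := by
    rw [mul_sum]
    exact sum_le_sum fun i _ => sq_sub_div_le_mul_klFun (hp i) (hq i)
  rw [sum_mul_klFun_div univ p q fun i _ => (hq i).ne', hp1, hq1] at pointwise
  linear_combination (3 / 2) * cauchySchwarz + (3 / 2) * pointwise
end
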